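/- Let n ≥ 1, let m be a Hessenberg function on {1,…,n}, let S be a decoration on m, and let λ be a partition of n. Then in ℤ[q]: Σ_{S' ⊆ S} (−1)^{|S'|} c_λ(m_{S'}) = Σ_{F} q^{wt_m(F) − k(F)} (q−1)^{k(F)}, where the right sum runs over all F ∈ F(G_m) with λ(F) = λ such that for every i ∈ S the pair {i, m(i)} is either an edge of F or a G_m-inversion of F, and k(F) := |{i ∈ S : {i, m(i)} is a G_m-inversion of F}|. -/

import Mathlib

open Finset

/-- A Hessenberg function on the vertex set `Fin n` (0-indexed version of `{1,…,n}`):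
a monotone function with `i ≤ m i` for all `i`.  The associated indifference graph
`G_m` has an edge `{i,j}` whenever `i < j ≤ m i`. -/
structure Hessenberg (n : ℕ) where
  m : Fin n → Fin n
  mono : Monotone m
  le_m : ∀ i, i ≤ m i

/-- An increasing spanning forest of the indifference graph `G_m`, encoded by its
parent function `g` : `g j = some u` means `{u, j}` is an edge of the forest with
`u < j` and `j ≤ m u` (so that `{u,j}` is an edge of `G_m`); `g j = none` means `j`
is a root. -/
def ISF {n : ℕ} (h : Hessenberg n) : Type :=
  {g : Fin n → Option (Fin n) // ∀ j u, g j = some u → u < j ∧ j ≤ h.m u}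

instance {n : ℕ} (h : Hessenberg n) : Fintype (ISF h) := by
  unfold ISF; infer_instance

instance {n : ℕ} (h : Hessenberg n) : DecidableEq (ISF h) := by
  unfold ISF; infer_instance

/-- The root of the component of `j` in the forest with parent function `g`. -/
def rootOf {n : ℕ} (g : Fin n → Option (Fin n))
    (hg : ∀ j u, g j = some u → u < j) (j : Fin n) : Fin n :=
  match hj : g j with
  | none => j
  | some u => rootOf g hg u
termination_by j.val
decreasing_by exact hg j u hj

/-- The root (minimal vertex) of the component of `j` in the forest `F`. -/
def ISF.root {n : ℕ} {h : Hessenberg n} (F : ISF h) (j : Fin n) : Fin n :=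
  rootOf F.1 (fun j u hj => (F.2 j u hj).1) j

/-- The set of roots of the forest `F`. -/
def ISF.roots {n : ℕ} {h : Hessenberg n} (F : ISF h) : Finset (Fin n) :=
  univ.filter (fun j => F.1 j = none)

/-- `ℓ(F)`, the number of connected components of `F`. -/
def ISF.numComp {n : ℕ} {h : Hessenberg n} (F : ISF h) : ℕ := F.roots.card

/-- The number of vertices of the component of `F` with root `r`. -/
def ISF.compSize {n : ℕ} {h : Hessenberg n} (F : ISF h) (r : Fin n) : ℕ :=
  (univ.filter (fun w => F.root w = r)).card

/-- `λ(F)`: the multiset of component sizes of `F` (a partition of `n`). -/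
def ISF.parts {n : ℕ} {h : Hessenberg n} (F : ISF h) : Multiset ℕ :=
  F.roots.val.map F.compSize

/-- The number of `G_m`-inversions of `F`: pairs `v < w` that are edges of `G_m`
(`w ≤ m v`) such that the component of `v` comes strictly after (has larger root
than) the component of `w`. -/
def ISF.inv {n : ℕ} {h : Hessenberg n} (F : ISF h) : ℕ :=
  (univ.filter (fun p : Fin n × Fin n =>
    p.1 < p.2 ∧ p.2 ≤ h.m p.1 ∧ F.root p.2 < F.root p.1)).card

/-- The length of the edge of `F` below `j` (0 if `j` is a root): the number of
vertices of the component of `j` strictly between the two endpoints. -/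
def ISF.edgeLen {n : ℕ} {h : Hessenberg n} (F : ISF h) (j : Fin n) : ℕ :=
  (F.1 j).elim 0 (fun u =>
    (univ.filter (fun w => F.root w = F.root j ∧ u < w ∧ w < j)).card)

/-- `wt_m(F) = inv(F) + Σ_T wt(T)`, the weight of the increasing spanning forest. -/
def ISF.wt {n : ℕ} {h : Hessenberg n} (F : ISF h) : ℕ :=
  F.inv + ∑ j, F.edgeLen j

/-- `y_{λ(F)}`, the product of `y` over the component sizes of `F`. -/
def yProd {R : Type*} [CommRing R] (y : ℕ → R) {n : ℕ} {h : Hessenberg n}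
    (F : ISF h) : R :=
  ∏ r ∈ F.roots, y (F.compSize r)

/-- `X(m) = Σ_{F ∈ F(G_m)} q^{wt_m(F)} y_{λ(F)}`. -/
def Xfun {R : Type*} [CommRing R] (q : R) (y : ℕ → R) {n : ℕ} (h : Hessenberg n) : R :=
  ∑ F : ISF h, q ^ F.wt * yProd y F

/-- The `q`-integer `[j]_q = 1 + q + ⋯ + q^{j-1}`. -/
def qInt {R : Type*} [CommRing R] (q : R) (j : ℕ) : R := ∑ k ∈ range j, q ^ k

/-- The `q`-factorial `n!_q = Π_{j=1}^n [j]_q`. -/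
def qFact {R : Type*} [CommRing R] (q : R) (n : ℕ) : R := ∏ j ∈ range n, qInt q (j + 1)

/-- `c_λ(m) = Σ_{F ∈ F(G_m), λ(F) = λ} q^{wt_m(F)} ∈ ℤ[q]`. -/
noncomputable def cLam {n : ℕ} (h : Hessenberg n) (lam : Nat.Partition n) : Polynomial ℤ :=
  ∑ F ∈ Finset.univ.filter (fun F : ISF h => F.parts = lam.parts),
    (Polynomial.X : Polynomial ℤ) ^ F.wt

/-- The number `k(F)` of `i ∈ S` such that the pair `{i, m(i)}` is a `G_m`-inversion
of `F`, i.e. the root of the component of `m(i)` is smaller than that of `i`. -/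
def kInv {n : ℕ} {h : Hessenberg n} (S : Finset (Fin n)) (F : ISF h) : ℕ :=
  (S.filter (fun i => F.root (h.m i) < F.root i)).card
lemma rootOf_none {n : ℕ} {g : Fin n → Option (Fin n)}
    {hg : ∀ j u, g j = some u → u < j} {j : Fin n} (hj : g j = none) :
    rootOf g hg j = j := by
  rw [rootOf]; split <;> simp_all

lemma rootOf_some {n : ℕ} {g : Fin n → Option (Fin n)}
    {hg : ∀ j u, g j = some u → u < j} {j u : Fin n} (hj : g j = some u) :
    rootOf g hg j = rootOf g hg u := by
  rw [rootOf]
  split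
  · simp_all
  · rename_i v hv; rw [hj] at hv; injection hv with h; rw [h]

lemma ISF.root_some {n : ℕ} {h : Hessenberg n} (F : ISF h) {j u : Fin n}
    (hj : F.1 j = some u) : F.root j = F.root u :=
  rootOf_some hj

lemma ISF.root_congr {n : ℕ} {h1 h2 : Hessenberg n} (F : ISF h1) (F' : ISF h2)
    (hFF : F.1 = F'.1) : F.root = F'.root := by
  obtain ⟨g, p⟩ := F; obtain ⟨g', p'⟩ := F'
  simp only at hFF; subst hFF; rfl

lemma ISF.parts_congr {n : ℕ} {h1 h2 : Hessenberg n} (F : ISF h1) (F' : ISF h2)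
    (hFF : F.1 = F'.1) : F.parts = F'.parts := by
  obtain ⟨g, p⟩ := F; obtain ⟨g', p'⟩ := F'
  simp only at hFF; subst hFF; rfl

lemma ISF.edgeLen_congr {n : ℕ} {h1 h2 : Hessenberg n} (F : ISF h1) (F' : ISF h2)
    (hFF : F.1 = F'.1) (j : Fin n) : F.edgeLen j = F'.edgeLen j := by
  obtain ⟨g, p⟩ := F; obtain ⟨g', p'⟩ := F'
  simp only at hFF; subst hFF; rfl

lemma kInv_le_inv {n : ℕ} {h : Hessenberg n} (S : Finset (Fin n)) (F : ISF h)
    (hlt : ∀ i ∈ S, i < h.m i) : kInv S F ≤ F.inv := by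
  unfold kInv ISF.inv
  apply Finset.card_le_card_of_injOn (fun i => (i, h.m i))
  · intro i hi
    simp only [Finset.coe_filter, Finset.mem_coe, Finset.mem_filter, Set.mem_setOf_eq] at hi ⊢
    exact ⟨Finset.mem_univ _, hlt i hi.1, le_refl _, hi.2⟩
  · intro a _ b _ hab
    exact (Prod.mk.injEq _ _ _ _ ▸ hab).1

/-- Transfer of inversion counts between `m` and the deformed `h'`. -/
lemma inv_transfer {n : ℕ} {m h' : Hessenberg n} {S' : Finset (Fin n)}
    (hh' : ∀ j : Fin n, ((h'.m j : ℕ)) = if j ∈ S' then (m.m j : ℕ) - 1 else (m.m j : ℕ))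
    (hlt : ∀ i ∈ S', i < m.m i)
    (F : ISF h') (F' : ISF m) (hFF : F.1 = F'.1) :
    F'.inv = F.inv + kInv S' F' := by
  have hroot := ISF.root_congr F F' hFF
  set P := Finset.univ.filter (fun p : Fin n × Fin n =>
    p.1 < p.2 ∧ p.2 ≤ m.m p.1 ∧ F'.root p.2 < F'.root p.1) with hP
  set Q := Finset.univ.filter (fun p : Fin n × Fin n =>
    p.1 < p.2 ∧ p.2 ≤ h'.m p.1 ∧ F'.root p.2 < F'.root p.1) with hQ
  have hFinv : F.inv = Q.card := by
    unfold ISF.inv; rw [hroot]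
  have hsub : Q ⊆ P := by
    intro p hp
    simp only [hQ, hP, Finset.mem_filter] at hp ⊢
    refine ⟨hp.1, hp.2.1, ?_, hp.2.2.2⟩
    have := hh' p.1
    have h2 := hp.2.2.1
    rw [Fin.le_def] at h2 ⊢
    split at this <;> omega
  have hdiff : P \ Q = (S'.filter (fun i => F'.root (m.m i) < F'.root i)).image
      (fun i => (i, m.m i)) := by
    ext p
    simp only [Finset.mem_sdiff, hP, hQ, Finset.mem_filter, Finset.mem_univ, true_and,
      Finset.mem_image]
    constructor
    · rintro ⟨⟨h1, h2, h3⟩, h4⟩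
      have hnot : ¬ (p.2 ≤ h'.m p.1) := by
        intro hle; exact h4 ⟨h1, hle, h3⟩
      have := hh' p.1
      by_cases hmem : p.1 ∈ S'
      · simp only [hmem, if_pos] at this
        have hltp : (p.1 : ℕ) < (m.m p.1 : ℕ) := hlt p.1 hmem
        have h2' : (p.2 : ℕ) ≤ (m.m p.1 : ℕ) := h2
        have hnot' : ¬ ((p.2 : ℕ) ≤ (h'.m p.1 : ℕ)) := hnot
        have hp2 : (p.2 : ℕ) = (m.m p.1 : ℕ) := by omega
        refine ⟨p.1, ⟨hmem, ?_⟩, ?_⟩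
        · rwa [show m.m p.1 = p.2 from (Fin.ext hp2).symm]
        · exact Prod.ext rfl (Fin.ext hp2.symm)
      · simp only [hmem, if_neg, not_false_iff] at this
        exact absurd (show (p.2 : ℕ) ≤ (h'.m p.1 : ℕ) by
          have h2' : (p.2 : ℕ) ≤ (m.m p.1 : ℕ) := h2; omega) hnot
    · rintro ⟨i, ⟨hiS, hir⟩, rfl⟩
      have hltp := hlt i hiS
      have := hh' i
      simp only [hiS, if_pos] at this
      refine ⟨⟨hltp, le_refl _, hir⟩, ?_⟩
      rintro ⟨-, hle, -⟩
      have hle' : (m.m i : ℕ) ≤ (h'.m i : ℕ) := hle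
      have hltp' : (i : ℕ) < (m.m i : ℕ) := hltp
      omega
  have hcard : (P \ Q).card = kInv S' F' := by
    rw [hdiff, Finset.card_image_of_injOn]
    · rfl
    · intro a _ b _ hab
      exact (Prod.mk.injEq _ _ _ _ ▸ hab).1
  have : P.card = Q.card + (P \ Q).card := by
    rw [Finset.card_sdiff_of_subset hsub]
    have := Finset.card_le_card hsub
    omega
  have hPinv : F'.inv = P.card := rfl
  rw [hPinv, this, hcard, hFinv]

lemma cLam_transfer {n : ℕ} (m : Hessenberg n) (S' : Finset (Fin n))
    (hlt : ∀ i ∈ S', i < m.m i) (h' : Hessenberg n)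
    (hh' : ∀ j : Fin n, ((h'.m j : ℕ)) = if j ∈ S' then (m.m j : ℕ) - 1 else (m.m j : ℕ))
    (lam : Nat.Partition n) :
    cLam h' lam = ∑ F ∈ Finset.univ.filter (fun F : ISF m => F.parts = lam.parts ∧
        ∀ i ∈ S', F.1 (m.m i) ≠ some i),
      (Polynomial.X : Polynomial ℤ) ^ (F.wt - kInv S' F) := by
  unfold cLam
  have hle : ∀ u : Fin n, h'.m u ≤ m.m u := by
    intro u
    rw [Fin.le_def]
    have := hh' u
    split at this <;> omega
  refine Finset.sum_bij' (fun F _ => (⟨F.1, fun j u hj => ⟨(F.2 j u hj).1,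
      le_trans (F.2 j u hj).2 (hle u)⟩⟩ : ISF m))
    (fun F' hF' => (⟨F'.1, fun j u hj => ⟨(F'.2 j u hj).1, ?_⟩⟩ : ISF h'))
    ?_ ?_ ?_ ?_ ?_
  · -- j ≤ h'.m u for the inverse map
    simp only [Finset.mem_filter] at hF'
    rw [Fin.le_def]
    rw [hh' u]
    by_cases hu : u ∈ S'
    · simp only [hu, if_pos]
      have hne := hF'.2.2 u hu
      have hj2 : (j : ℕ) ≤ (m.m u : ℕ) := (F'.2 j u hj).2
      have : j ≠ m.m u := by
        intro hEq; exact hne (hEq ▸ hj)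
      have : (j : ℕ) ≠ (m.m u : ℕ) := fun hc => this (Fin.ext hc)
      omega
    · simp only [hu, if_neg, not_false_iff]
      exact (F'.2 j u hj).2
  · -- forward map lands in target
    intro F hF
    simp only [Finset.mem_filter] at hF ⊢
    set F' : ISF m := ⟨F.1, _⟩ with hF'def
    refine Finset.mem_filter.2 ⟨Finset.mem_univ _, ?_, ?_⟩
    · rw [← ISF.parts_congr F F' rfl]; exact hF.2
    · intro i hi hEq
      have := (F.2 (m.m i) i hEq).2
      have h1 : (m.m i : ℕ) ≤ (h'.m i : ℕ) := this
      have h2 := hh' i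
      simp only [hi, if_pos] at h2
      have h3 : (i : ℕ) < (m.m i : ℕ) := hlt i hi
      omega
  · -- inverse map lands in source
    intro F' hF'
    simp only [Finset.mem_filter] at hF' ⊢
    set F : ISF h' := ⟨F'.1, _⟩ with hFdef
    exact Finset.mem_filter.2 ⟨Finset.mem_univ _, by rw [ISF.parts_congr F F' rfl]; exact hF'.2.1⟩
  · intro F hF; rfl
  · intro F' hF'; rfl
  · -- value equality
    intro F hF
    set F' : ISF m := ⟨F.1, _⟩ with hF'def
    have hwt : F'.wt = F.wt + kInv S' F' := by
      unfold ISF.wt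
      rw [inv_transfer hh' hlt F F' rfl]
      have : ∀ j, F.edgeLen j = F'.edgeLen j := ISF.edgeLen_congr F F' rfl
      simp only [this]
      ring
    rw [hwt]
    simp

lemma dec_inner_sum {n : ℕ} (m : Hessenberg n) (S : Finset (Fin n))
    (hlt : ∀ i ∈ S, i < m.m i) (F : ISF m) :
    ∑ S' ∈ (S.filter (fun i => F.1 (m.m i) ≠ some i)).powerset,
      (-1 : Polynomial ℤ) ^ S'.card * (Polynomial.X : Polynomial ℤ) ^ (F.wt - kInv S' F)
    = if (∀ i ∈ S, F.1 (m.m i) = some i ∨ F.root (m.m i) < F.root i) then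
        (Polynomial.X : Polynomial ℤ) ^ (F.wt - kInv S F) *
          ((Polynomial.X : Polynomial ℤ) - 1) ^ kInv S F
      else 0 := by
  set X : Polynomial ℤ := Polynomial.X with hX
  set D := S.filter (fun i => F.1 (m.m i) ≠ some i) with hD
  set Bb := S.filter (fun i => F.root (m.m i) < F.root i) with hBb
  have hBbD : Bb ⊆ D := by
    intro i hi
    simp only [hBb, hD, Finset.mem_filter] at hi ⊢
    refine ⟨hi.1, fun hEq => ?_⟩
    have := ISF.root_some F hEq
    rw [this] at hi
    exact lt_irrefl _ hi.2
  have hk : kInv S F = Bb.card := rfl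
  have hbw : Bb.card ≤ F.wt := by
    rw [← hk]
    exact le_trans (kInv_le_inv S F hlt) (Nat.le_add_right _ _)
  -- for S' ⊆ D : kInv S' F = (S' ∩ Bb).card
  have hkS' : ∀ S' ∈ D.powerset, kInv S' F = (S' ∩ Bb).card := by
    intro S' hS'
    rw [Finset.mem_powerset] at hS'
    unfold kInv
    congr 1
    ext a
    simp only [Finset.mem_filter, Finset.mem_inter, hBb]
    constructor
    · rintro ⟨h1, h2⟩
      exact ⟨h1, (Finset.mem_filter.1 (hD ▸ hS' h1)).1, h2⟩
    · rintro ⟨h1, _, h2⟩; exact ⟨h1, h2⟩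
  -- rewrite terms
  have hterm : ∀ S' ∈ D.powerset,
      (-1 : Polynomial ℤ) ^ S'.card * X ^ (F.wt - kInv S' F)
      = X ^ (F.wt - Bb.card) * ((-1 : Polynomial ℤ) ^ S'.card * X ^ (Bb \ S').card) := by
    intro S' hS'
    rw [hkS' S' hS']
    have h1 : (S' ∩ Bb).card ≤ Bb.card := Finset.card_le_card (Finset.inter_subset_right)
    have h2 : (Bb \ S').card = Bb.card - (S' ∩ Bb).card := by
      have h3 := Finset.card_sdiff_add_card_inter Bb S'
      rw [Finset.inter_comm] at h3
      omega
    have h3 : F.wt - (S' ∩ Bb).card = (F.wt - Bb.card) + (Bb \ S').card := by omega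
    rw [h3, pow_add]
    ring
  rw [Finset.sum_congr rfl hterm, ← Finset.mul_sum]
  -- now compute the pure sum via prod_add
  have hprod := Finset.prod_add (fun _ : Fin n => (-1 : Polynomial ℤ))
    (fun i => if i ∈ Bb then X else (1 : Polynomial ℤ)) D
  have hrhs : ∑ t ∈ D.powerset, (∏ _i ∈ t, (-1 : Polynomial ℤ)) *
      ∏ i ∈ D \ t, (if i ∈ Bb then X else 1)
      = ∑ S' ∈ D.powerset, (-1 : Polynomial ℤ) ^ S'.card * X ^ (Bb \ S').card := by
    refine Finset.sum_congr rfl (fun t ht => ?_)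
    rw [Finset.mem_powerset] at ht
    congr 1
    · rw [Finset.prod_const]
    · rw [Finset.prod_ite_mem, Finset.prod_const]
      congr 1
      congr 1
      ext a
      simp only [Finset.mem_inter, Finset.mem_sdiff]
      constructor
      · rintro ⟨⟨h1, h2⟩, h3⟩; exact ⟨h3, h2⟩
      · rintro ⟨h1, h2⟩; exact ⟨⟨hBbD h1, h2⟩, h1⟩
  rw [hrhs] at hprod
  rw [← hprod]
  have hfac : ∏ i ∈ D, ((-1 : Polynomial ℤ) + if i ∈ Bb then X else 1)
      = ∏ i ∈ D, (if i ∈ Bb then X - 1 else 0) := by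
    refine Finset.prod_congr rfl (fun i _ => ?_)
    split_ifs <;> ring
  rw [hfac]
  by_cases hcond : ∀ i ∈ S, F.1 (m.m i) = some i ∨ F.root (m.m i) < F.root i
  · have hDB : D = Bb := by
      apply Finset.Subset.antisymm _ hBbD
      intro i hi
      simp only [hD, Finset.mem_filter] at hi
      simp only [hBb, Finset.mem_filter]
      exact ⟨hi.1, (hcond i hi.1).resolve_left hi.2⟩
    rw [if_pos hcond, hDB, hk]
    congr 1
    rw [Finset.prod_congr rfl (fun i hi => if_pos hi), Finset.prod_const]
  · rw [if_neg hcond]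
    push_neg at hcond
    obtain ⟨i, hiS, hined, hinin⟩ := hcond
    have hiD : i ∈ D := by simp only [hD, Finset.mem_filter]; exact ⟨hiS, hined⟩
    have hiB : i ∉ Bb := by
      simp only [hBb, Finset.mem_filter]; rintro ⟨-, hc⟩; exact absurd hc (not_lt.mpr hinin)
    rw [Finset.prod_eq_zero hiD (by rw [if_neg hiB]), mul_zero]


/-- With `S` a decoration on `m` and `m_{S'}` as in the paper
(hypothesis `hms`), `Σ_{S' ⊆ S} (-1)^{|S'|} c_λ(m_{S'})` equals the sum of
`q^{wt_m(F) - k(F)} (q-1)^{k(F)}` over the increasing spanning forests `F` of `G_m`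
with `λ(F) = λ` such that for every `i ∈ S` the pair `{i, m(i)}` is either an edge
of `F` (i.e. the parent of `m(i)` in `F` is `i`) or a `G_m`-inversion of `F`. -/
theorem decorated_sum_eq (n : ℕ) (hn : 1 ≤ n) (m : Hessenberg n)
    (S : Finset (Fin n))
    (hdec : ∀ i ∈ S, i < m.m i ∧ ∀ j : Fin n, (j : ℕ) + 1 = (i : ℕ) → m.m j < m.m i)
    (ms : Finset (Fin n) → Hessenberg n)
    (hms : ∀ S' ∈ S.powerset, ∀ j : Fin n,
      ((ms S').m j : ℕ) = if j ∈ S' then (m.m j : ℕ) - 1 else (m.m j : ℕ))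
    (lam : Nat.Partition n) :
    ∑ S' ∈ S.powerset, (-1 : Polynomial ℤ) ^ S'.card * cLam (ms S') lam
      = ∑ F ∈ Finset.univ.filter (fun F : ISF m => F.parts = lam.parts ∧
            ∀ i ∈ S, F.1 (m.m i) = some i ∨ F.root (m.m i) < F.root i),
          (Polynomial.X : Polynomial ℤ) ^ (F.wt - kInv S F) *
            ((Polynomial.X : Polynomial ℤ) - 1) ^ kInv S F := by
  classical
  have hlt : ∀ i ∈ S, i < m.m i := fun i hi => (hdec i hi).1
  set T := Finset.univ.filter (fun F : ISF m => F.parts = lam.parts) with hT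
  have step1 : ∀ S' ∈ S.powerset,
      (-1 : Polynomial ℤ) ^ S'.card * cLam (ms S') lam
      = ∑ F ∈ T, (if (∀ i ∈ S', F.1 (m.m i) ≠ some i) then
          (-1 : Polynomial ℤ) ^ S'.card *
            (Polynomial.X : Polynomial ℤ) ^ (F.wt - kInv S' F) else 0) := by
    intro S' hS'
    rw [cLam_transfer m S' (fun i hi => hlt i (Finset.mem_powerset.1 hS' hi))
      (ms S') (hms S' hS') lam, Finset.mul_sum]
    have hsplit : Finset.univ.filter (fun F : ISF m => F.parts = lam.parts ∧
          ∀ i ∈ S', F.1 (m.m i) ≠ some i)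
        = T.filter (fun F => ∀ i ∈ S', F.1 (m.m i) ≠ some i) := by
      rw [hT, Finset.filter_filter]
    rw [hsplit, Finset.sum_filter]
  rw [Finset.sum_congr rfl step1, Finset.sum_comm]
  have step2 : ∀ F ∈ T,
      (∑ S' ∈ S.powerset, if (∀ i ∈ S', F.1 (m.m i) ≠ some i) then
        (-1 : Polynomial ℤ) ^ S'.card *
          (Polynomial.X : Polynomial ℤ) ^ (F.wt - kInv S' F) else 0)
      = if (∀ i ∈ S, F.1 (m.m i) = some i ∨ F.root (m.m i) < F.root i) then
          (Polynomial.X : Polynomial ℤ) ^ (F.wt - kInv S F) *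
            ((Polynomial.X : Polynomial ℤ) - 1) ^ kInv S F
        else 0 := by
    intro F _
    rw [← Finset.sum_filter]
    have hps : S.powerset.filter (fun S' => ∀ i ∈ S', F.1 (m.m i) ≠ some i)
        = (S.filter (fun i => F.1 (m.m i) ≠ some i)).powerset := by
      ext S'
      simp only [Finset.mem_filter, Finset.mem_powerset]
      constructor
      · rintro ⟨h1, h2⟩
        intro a ha
        exact Finset.mem_filter.2 ⟨h1 ha, h2 a ha⟩
      · intro h
        refine ⟨fun a ha => ?_, fun a ha => ?_⟩
        · exact (Finset.mem_filter.1 (h ha)).1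
        · exact (Finset.mem_filter.1 (h ha)).2
    rw [hps]
    exact dec_inner_sum m S hlt F
  rw [Finset.sum_congr rfl step2, ← Finset.sum_filter, hT, Finset.filter_filter]
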